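/- arXiv:1512.00525 — 9 statements merged into one kernel-verified Lean document; each statement's English description precedes it below -/
import Mathlib

section
/- If A₁, ..., A_k are families of s-element subsets of [n] with n ≥ c + k(s−c) and 0 ≤ c ≤ s−1, such that there is no choice of sets A_i ∈ A_i (one from each family) with pairwise intersections all equal to a common set C of size exactly c and with each A_i \ C nonempty, then the sum of the sizes |A₁| + ... + |A_k| is at most (k−1)·C(n,s). -/
/-!
Call a core `C` of size `c` together with `k` pairwise disjoint petals `P i` of size `s - c`,
all disjoint from `C`, a frame; `n ≥ c + k(s - c)` is exactly what makes frames exist in `[n]`.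
Double count the pairs `(frame, i)` with `C ∪ P i ∈ A i`. The permutations of `[n]` act
transitively on `s`-sets and preserve frames, so every `s`-set is `C ∪ P i` for the same number
of frames, namely `#frames / C(n, s)`; hence the pairs number `∑ |A i| · #frames / C(n, s)`.
On the other hand a frame with `C ∪ P i ∈ A i` for every `i` would be a multicolor sunflower,
so each frame contributes at most `k - 1` pairs.
-/

open Finset Function
open scoped Pointwise

section Frame

variable {α ι : Type*} {c p : ℕ} {σ : Finset α × (ι → Finset α)}

structure IsSunflowerFrame (c p : ℕ) (σ : Finset α × (ι → Finset α)) : Prop where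
  card_core : #σ.1 = c
  card_petal : ∀ i, #(σ.2 i) = p
  disjoint_core_petal : ∀ i, Disjoint σ.1 (σ.2 i)
  pairwise_disjoint_petal : Pairwise (Disjoint on σ.2)

theorem exists_isSunflowerFrame [Fintype α] [Fintype ι]
    (h : c + Fintype.card ι * p ≤ Fintype.card α) :
    ∃ σ : Finset α × (ι → Finset α), IsSunflowerFrame c p σ := by
  obtain ⟨e⟩ := Embedding.nonempty_of_card_le (α := Fin c ⊕ ι × Fin p) (β := α)
    (by simpa using h)
  refine ⟨(univ.map (Embedding.inl.trans e),
    fun i => univ.map ((Embedding.sectR i (Fin p)).trans (Embedding.inr.trans e))),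
    by simp, fun i => by simp, fun i => ?_, fun i j hij => ?_⟩
  · simp [disjoint_left, e.injective.eq_iff]
  · simp [disjoint_left, e.injective.eq_iff, Ne.symm hij]

variable [DecidableEq α]

namespace IsSunflowerFrame

theorem card_union (h : IsSunflowerFrame c p σ) (i : ι) : #(σ.1 ∪ σ.2 i) = c + p := by
  rw [card_union_of_disjoint (h.disjoint_core_petal i), h.card_core, h.card_petal i]

theorem union_inter_union_eq_core (h : IsSunflowerFrame c p σ) {i j : ι} (hij : i ≠ j) :
    (σ.1 ∪ σ.2 i) ∩ (σ.1 ∪ σ.2 j) = σ.1 := by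
  rw [← union_inter_distrib_left, disjoint_iff_inter_eq_empty.1 (h.pairwise_disjoint_petal hij), union_empty]

theorem nonempty_union_sdiff_core (h : IsSunflowerFrame c p σ) (hp : 0 < p) (i : ι) :
    ((σ.1 ∪ σ.2 i) \ σ.1).Nonempty := by
  rw [union_sdiff_cancel_left (h.disjoint_core_petal i), ← card_pos, h.card_petal i]
  exact hp

theorem smul {G : Type*} [Group G] [MulAction G α] (h : IsSunflowerFrame c p σ) (g : G) :
    IsSunflowerFrame c p (g • σ) := by
  obtain ⟨hcore, hpetal, hcore_petal, hpetals⟩ := h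
  have hdisj : ∀ {s t : Finset α}, Disjoint s t → Disjoint (g • s) (g • t) := fun hst =>
    disjoint_image (MulAction.injective g) |>.2 hst
  exact ⟨by simpa using hcore, fun i => by simpa using hpetal i,
    fun i => hdisj (hcore_petal i), fun i j hij => hdisj (hpetals hij)⟩

end IsSunflowerFrame

theorem isSunflowerFrame_smul_iff {G : Type*} [Group G] [MulAction G α] (g : G) :
    IsSunflowerFrame c p (g • σ) ↔ IsSunflowerFrame c p σ :=
  ⟨fun h => by simpa using h.smul g⁻¹, fun h => h.smul g⟩

end Frame

section Counting

variable (α ι : Type*) [Fintype α] [Fintype ι] [DecidableEq ι] (c p : ℕ)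

open Classical in
noncomputable def sunflowerFrames : Finset (Finset α × (ι → Finset α)) :=
  {σ | IsSunflowerFrame c p σ}

variable {α ι c p}

@[simp]
theorem mem_sunflowerFrames {σ : Finset α × (ι → Finset α)} :
    σ ∈ sunflowerFrames α ι c p ↔ IsSunflowerFrame c p σ := by
  simp [sunflowerFrames]

variable [DecidableEq α]

theorem card_filter_union_eq_congr (i : ι) {S T : Finset α} (h : #S = #T) :
    #{σ ∈ sunflowerFrames α ι c p | σ.1 ∪ σ.2 i = S} =
      #{σ ∈ sunflowerFrames α ι c p | σ.1 ∪ σ.2 i = T} := by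
  have := Set.powersetCard.isPretransitive (α := α) (n := #T)
  obtain ⟨π, hπ⟩ := MulAction.exists_smul_eq (Equiv.Perm α)
    (⟨S, h⟩ : Set.powersetCard α #T) ⟨T, rfl⟩
  replace hπ : π • S = T := congrArg Subtype.val hπ
  refine card_equiv (MulAction.toPerm π) fun σ => ?_
  simp only [mem_filter, mem_sunflowerFrames, MulAction.toPerm_apply, isSunflowerFrame_smul_iff,
    Prod.smul_fst, Prod.smul_snd, Pi.smul_apply, ← smul_finset_union, ← hπ, smul_left_cancel_iff]

theorem card_filter_union_mem (i : ι) {S₀ : Finset α} (hS₀ : #S₀ = c + p) {𝒜 : Finset (Finset α)}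
    (h𝒜 : ∀ S ∈ 𝒜, #S = c + p) :
    #{σ ∈ sunflowerFrames α ι c p | σ.1 ∪ σ.2 i ∈ 𝒜} =
      #𝒜 * #{σ ∈ sunflowerFrames α ι c p | σ.1 ∪ σ.2 i = S₀} := by
  rw [← sum_card_fiberwise_eq_card_filter]
  exact sum_const_nat fun S hS => card_filter_union_eq_congr i ((h𝒜 S hS).trans hS₀.symm)

theorem card_filter_union_mem_mul_choose (i : ι) {𝒜 : Finset (Finset α)}
    (h𝒜 : ∀ S ∈ 𝒜, #S = c + p) :
    #{σ ∈ sunflowerFrames α ι c p | σ.1 ∪ σ.2 i ∈ 𝒜} * (Fintype.card α).choose (c + p) =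
      #𝒜 * #(sunflowerFrames α ι c p) := by
  obtain rfl | ⟨S₀, hS₀⟩ := 𝒜.eq_empty_or_nonempty
  · simp
  have hall : #(sunflowerFrames α ι c p) =
      #{σ ∈ sunflowerFrames α ι c p | σ.1 ∪ σ.2 i ∈ powersetCard (c + p) univ} := by
    rw [filter_true_of_mem fun σ hσ => by simpa using (mem_sunflowerFrames.1 hσ).card_union i]
  have hS₀ := h𝒜 S₀ hS₀
  rw [hall, card_filter_union_mem i hS₀ h𝒜, card_filter_union_mem i hS₀ fun S hS => by
    simpa using hS, card_powersetCard, card_univ]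
  ring

theorem sum_card_le_mul_choose (A : ι → Finset (Finset α)) (hA : ∀ i, ∀ S ∈ A i, #S = c + p)
    (hF : (sunflowerFrames α ι c p).Nonempty) {r : ℕ}
    (hr : ∀ σ ∈ sunflowerFrames α ι c p, #{i | σ.1 ∪ σ.2 i ∈ A i} ≤ r) :
    ∑ i, #(A i) ≤ r * (Fintype.card α).choose (c + p) := by
  set F := sunflowerFrames α ι c p
  refine Nat.le_of_mul_le_mul_right ?_ hF.card_pos
  calc (∑ i, #(A i)) * #F
      = (∑ i, #{σ ∈ F | σ.1 ∪ σ.2 i ∈ A i}) * (Fintype.card α).choose (c + p) := by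
        rw [sum_mul, sum_mul]
        exact sum_congr rfl fun i _ => (card_filter_union_mem_mul_choose i (hA i)).symm
    _ = (∑ σ ∈ F, #{i | σ.1 ∪ σ.2 i ∈ A i}) * (Fintype.card α).choose (c + p) := by
        congr 1
        exact sum_card_bipartiteAbove_eq_sum_card_bipartiteBelow
          (fun i (σ : Finset α × (ι → Finset α)) => σ.1 ∪ σ.2 i ∈ A i)
    _ ≤ (∑ _σ ∈ F, r) * (Fintype.card α).choose (c + p) := by gcongr with σ hσ; exact hr σ hσ
    _ = r * (Fintype.card α).choose (c + p) * #F := by rw [sum_const, smul_eq_mul]; ring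

end Counting

theorem sum_bound_uniform_no_sunflower_core_general (n k s c : ℕ)
    (hs : 1 ≤ s) (hc : c ≤ s - 1) (hn : c + k * (s - c) ≤ n)
    (A : Fin k → Finset (Finset (Fin n)))
    (hunif : ∀ i, ∀ S ∈ A i, S.card = s)
    (hfree : ¬ ∃ (f : Fin k → Finset (Fin n)) (C : Finset (Fin n)),
      (∀ i, f i ∈ A i) ∧ C.card = c ∧
      (∀ i j, i ≠ j → f i ∩ f j = C) ∧
      (∀ i, (f i \ C).Nonempty)) :
    ∑ i, (A i).card ≤ (k - 1) * n.choose s := by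
  have hcs : c + (s - c) = s := by omega
  obtain ⟨σ₀, hσ₀⟩ := exists_isSunflowerFrame (ι := Fin k) (α := Fin n) (c := c) (p := s - c)
    (by simpa using hn)
  have hsunflower : ∀ σ ∈ sunflowerFrames (Fin n) (Fin k) c (s - c),
      #{i | σ.1 ∪ σ.2 i ∈ A i} ≤ k - 1 := by
    intro σ hσ
    rw [mem_sunflowerFrames] at hσ
    have hmissing : ({i | σ.1 ∪ σ.2 i ∈ A i} : Finset (Fin k)) ⊂ univ := filter_ssubset.2 <| by
      by_contra! hall
      exact hfree ⟨_, σ.1, fun i => hall i (mem_univ i), hσ.card_core,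
        fun i j => hσ.union_inter_union_eq_core, hσ.nonempty_union_sdiff_core (by omega)⟩
    have := card_lt_card hmissing
    rw [card_univ, Fintype.card_fin] at this
    omega
  simpa [hcs] using sum_card_le_mul_choose A (by simpa [hcs] using hunif)
    ⟨σ₀, mem_sunflowerFrames.2 hσ₀⟩ hsunflower

/-- If `A 0, …, A (k-1)` are families of `s`-element subsets of `[n]`, with
`n ≥ c + k(s-c)` and `0 ≤ c ≤ s-1`, containing no multicolor sunflower with
`k` petals and core size `c`, then `∑ |A i| ≤ (k-1) · C(n,s)`. -/
theorem sum_bound_uniform_no_sunflower_core (n k s c : ℕ)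
    (hs : 1 ≤ s) (hk : 2 ≤ k) (hc : c ≤ s - 1) (hn : c + k * (s - c) ≤ n)
    (A : Fin k → Finset (Finset (Fin n)))
    (hunif : ∀ i, ∀ S ∈ A i, S.card = s)
    (hfree : ¬ ∃ (f : Fin k → Finset (Fin n)) (C : Finset (Fin n)),
      (∀ i, f i ∈ A i) ∧ C.card = c ∧
      (∀ i j, i ≠ j → f i ∩ f j = C) ∧
      (∀ i, (f i \ C).Nonempty)) :
    ∑ i, (A i).card ≤ (k - 1) * n.choose s :=
  sum_bound_uniform_no_sunflower_core_general n k s c hs hc hn A hunif hfree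
end

section
/- For n ≥ k ≥ 3, S(n,k) ≥ (k−1)·2^n + 1 + Σ_{s=n−k+2}^{n} C(n,s). Specifically, taking A₁ = ... = A_{k−1} = 2^[n] and A_k = {∅} ∪ {S ⊆ [n] : |S| ≥ n−k+2}, this k-tuple of families contains no multicolor sunflower with k petals. -/
/-- Lower bound for `S(n,k)`: the explicit `k`-tuple with
`A 0 = ⋯ = A (k-2) = 2^[n]` and `A (k-1) = {∅} ∪ {S : |S| ≥ n-k+2}` contains no
multicolor sunflower with `k` petals, and its sum of sizes is at least
`(k-1)·2^n + 1 + ∑_{s=n-k+2}^n C(n,s)`. -/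
theorem sum_lower_bound_construction (n k : ℕ) (hk : 3 ≤ k) (hn : k ≤ n)
    (A : Fin k → Finset (Finset (Fin n)))
    (hA : ∀ i : Fin k, A i =
      if i.val < k - 1 then Finset.univ
      else insert (∅ : Finset (Fin n))
        (Finset.univ.filter fun S => n - k + 2 ≤ S.card)) :
    (¬ ∃ (f : Fin k → Finset (Fin n)) (C : Finset (Fin n)),
        (∀ i, f i ∈ A i) ∧
        (∀ i j, i ≠ j → f i ∩ f j = C) ∧
        (∀ i, (f i \ C).Nonempty)) ∧
    (k - 1) * 2 ^ n + 1 + ∑ s ∈ Finset.Icc (n - k + 2) n, n.choose s ≤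
      ∑ i, (A i).card := by
  have hlast : k - 1 < k := by omega
  set last : Fin k := ⟨k - 1, hlast⟩ with hlastdef
  constructor
  · rintro ⟨f, C, h1, h2, h3⟩
    -- f last has large card
    have hAl := h1 last
    rw [hA last] at hAl
    simp only [hlastdef, lt_irrefl, if_neg (lt_irrefl _)] at hAl
    have hne : f last ≠ ∅ := by
      intro h
      obtain ⟨x, hx⟩ := h3 last
      simp [h] at hx
    have hcard : n - k + 2 ≤ (f last).card := by
      rcases Finset.mem_insert.1 hAl with h | h
      · exact absurd h hne
      · exact (Finset.mem_filter.1 h).2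
    -- injective family into complement
    set ι : Fin (k - 1) → Fin k := fun i => ⟨i.val, by omega⟩ with hι
    have hιne : ∀ i : Fin (k-1), ι i ≠ last := by
      intro i h
      have := congrArg Fin.val h
      simp [hι, hlastdef] at this
      omega
    choose x hx using fun i : Fin (k-1) => h3 (ι i)
    have hmem : ∀ i : Fin (k-1), x i ∈ (f last)ᶜ := by
      intro i
      rw [Finset.mem_compl]
      intro hmem
      have hxi := Finset.mem_sdiff.1 (hx i)
      have : x i ∈ f (ι i) ∩ f last := Finset.mem_inter.2 ⟨hxi.1, hmem⟩
      rw [h2 _ _ (hιne i)] at this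
      exact hxi.2 this
    have hinj : Set.InjOn x (Finset.univ : Finset (Fin (k-1))) := by
      intro i _ j _ hij
      by_contra hne'
      have hij' : ι i ≠ ι j := by
        intro h; apply hne'
        have hv : (ι i).val = (ι j).val := congrArg Fin.val h
        exact Fin.ext hv
      have hxi := Finset.mem_sdiff.1 (hx i)
      have hxj := Finset.mem_sdiff.1 (hx j)
      have : x i ∈ f (ι i) ∩ f (ι j) := Finset.mem_inter.2 ⟨hxi.1, hij ▸ hxj.1⟩
      rw [h2 _ _ hij'] at this
      exact hxi.2 this
    have hle : (Finset.univ : Finset (Fin (k-1))).card ≤ (f last)ᶜ.card :=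
      Finset.card_le_card_of_injOn x (fun i _ => hmem i) hinj
    rw [Finset.card_univ, Fintype.card_fin, Finset.card_compl, Fintype.card_fin] at hle
    have hcle : (f last).card ≤ n := (f last).card_le_univ.trans_eq (by simp)
    omega
  · -- counting
    have hsplit := Finset.sum_filter_add_sum_filter_not (Finset.univ : Finset (Fin k))
      (fun i => i.val < k - 1) (fun i => (A i).card)
    have h1 : ∀ i ∈ Finset.univ.filter (fun i : Fin k => i.val < k - 1),
        (A i).card = 2 ^ n := by
      intro i hi
      rw [hA i, if_pos (Finset.mem_filter.1 hi).2]
      simp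
    have h2 : Finset.univ.filter (fun i : Fin k => ¬ i.val < k - 1) = {last} := by
      ext i
      simp only [Finset.mem_filter, Finset.mem_univ, true_and, Finset.mem_singleton]
      constructor
      · intro h; ext; simp [hlastdef]; omega
      · intro h; subst h; simp [hlastdef]
    have hfc : (Finset.univ.filter (fun i : Fin k => i.val < k - 1)).card = k - 1 := by
      have : Finset.univ.filter (fun i : Fin k => i.val < k - 1) = Finset.Iio last := by
        ext i; simp [Fin.lt_def, hlastdef]
      rw [this, Fin.card_Iio]
    have hM : (insert (∅ : Finset (Fin n))
        (Finset.univ.filter fun S : Finset (Fin n) => n - k + 2 ≤ S.card)).card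
        = 1 + ∑ s ∈ Finset.Icc (n - k + 2) n, n.choose s := by
      rw [Finset.card_insert_of_notMem (by simp), add_comm]
      congr 1
      have hbi : Finset.univ.filter (fun S : Finset (Fin n) => n - k + 2 ≤ S.card)
          = (Finset.Icc (n - k + 2) n).biUnion
            (fun s => Finset.powersetCard s Finset.univ) := by
        ext S
        simp only [Finset.mem_filter, Finset.mem_univ, true_and, Finset.mem_biUnion,
          Finset.mem_Icc, Finset.mem_powersetCard]
        constructor
        · intro h
          exact ⟨S.card, ⟨h, (Finset.card_le_univ S).trans_eq (by simp)⟩, S.subset_univ, rfl⟩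
        · rintro ⟨s, ⟨hs1, _⟩, _, rfl⟩; exact hs1
      rw [hbi, Finset.card_biUnion]
      · apply Finset.sum_congr rfl
        intro s _
        rw [Finset.card_powersetCard, Finset.card_univ, Fintype.card_fin]
      · intro a _ b _ hab
        simp only [Finset.disjoint_left, Finset.mem_powersetCard]
        rintro S ⟨_, rfl⟩ ⟨_, h⟩
        exact hab h
    rw [← hsplit, Finset.sum_congr rfl h1, Finset.sum_const, h2, Finset.sum_singleton,
      hA last, if_neg (by simp [hlastdef]), hM, smul_eq_mul, hfc]
    omega
end

section
/- The k-tuple of families A₁ = A₂ = {S ⊆ [n] : 1 ∈ S or |S| ≥ n−1}, A₃ = {S ⊆ [n] : 1 ∉ S or |S| ≥ n−1}, and A₄ = ... = A_k = 2^[n] contains no multicolor sunflower with k petals. -/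
/-- The `k`-tuple `A 0 = A 1 = {S : 1 ∈ S or |S| ≥ n-1}`,
`A 2 = {S : 1 ∉ S or |S| ≥ n-1}`, `A i = 2^[n]` for `i ≥ 3`, contains no
multicolor sunflower with `k` petals.  (The element `1 ∈ [n]` is modeled by
`(⟨0, _⟩ : Fin n)`.) -/
theorem product_construction_sunflower_free (n k : ℕ) (hk : 3 ≤ k) (hn : k ≤ n)
    (A : Fin k → Finset (Finset (Fin n)))
    (hA01 : ∀ i : Fin k, i.val ≤ 1 → A i =
      Finset.univ.filter fun S =>
        (⟨0, by omega⟩ : Fin n) ∈ S ∨ n - 1 ≤ S.card)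
    (hA2 : ∀ i : Fin k, i.val = 2 → A i =
      Finset.univ.filter fun S =>
        (⟨0, by omega⟩ : Fin n) ∉ S ∨ n - 1 ≤ S.card)
    (hArest : ∀ i : Fin k, 3 ≤ i.val → A i = Finset.univ) :
    ¬ ∃ (f : Fin k → Finset (Fin n)) (C : Finset (Fin n)),
      (∀ i, f i ∈ A i) ∧
      (∀ i j, i ≠ j → f i ∩ f j = C) ∧
      (∀ i, (f i \ C).Nonempty) := by
  rintro ⟨f, C, hmem, hcore, hpet⟩
  have hn3 : 3 ≤ n := le_trans hk hn
  -- no f i can have card ≥ n - 1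
  have hbig : ∀ i : Fin k, ¬ (n - 1 ≤ (f i).card) := by
    intro i hi
    set j : Fin k := ⟨if i.val = 0 then 1 else 0, by split <;> omega⟩ with hj
    set j' : Fin k := ⟨if i.val = 2 then 1 else 2, by split <;> omega⟩ with hj'
    have hij : i ≠ j := by
      intro h; apply_fun Fin.val at h
      simp only [hj] at h; split_ifs at h <;> omega
    have hij' : i ≠ j' := by
      intro h; apply_fun Fin.val at h
      simp only [hj'] at h; split_ifs at h <;> omega
    have hjj' : j ≠ j' := by
      intro h; apply_fun Fin.val at h
      simp only [hj, hj'] at h; split_ifs at h <;> omega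
    set P := f j \ C with hP
    set Q := f j' \ C with hQ
    have hPQ : Disjoint P Q := by
      rw [Finset.disjoint_left]
      intro a haP haQ
      simp only [hP, hQ, Finset.mem_sdiff] at haP haQ
      have : a ∈ f j ∩ f j' := Finset.mem_inter.2 ⟨haP.1, haQ.1⟩
      rw [hcore j j' hjj'] at this
      exact haP.2 this
    have hPi : Disjoint P (f i) := by
      rw [Finset.disjoint_left]
      intro a haP hai
      simp only [hP, Finset.mem_sdiff] at haP
      have : a ∈ f j ∩ f i := Finset.mem_inter.2 ⟨haP.1, hai⟩
      rw [hcore j i hij.symm] at this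
      exact haP.2 this
    have hQi : Disjoint Q (f i) := by
      rw [Finset.disjoint_left]
      intro a haQ hai
      simp only [hQ, Finset.mem_sdiff] at haQ
      have : a ∈ f j' ∩ f i := Finset.mem_inter.2 ⟨haQ.1, hai⟩
      rw [hcore j' i hij'.symm] at this
      exact haQ.2 this
    have hdisj : Disjoint (P ∪ Q) (f i) := Finset.disjoint_union_left.2 ⟨hPi, hQi⟩
    have hcard : (P ∪ Q ∪ f i).card = P.card + Q.card + (f i).card := by
      rw [Finset.card_union_of_disjoint hdisj, Finset.card_union_of_disjoint hPQ]
    have hle : (P ∪ Q ∪ f i).card ≤ n := by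
      simpa using Finset.card_le_univ (P ∪ Q ∪ f i)
    have h1 : 1 ≤ P.card := Finset.card_pos.2 (hpet j)
    have h2 : 1 ≤ Q.card := Finset.card_pos.2 (hpet j')
    omega
  set z : Fin n := ⟨0, by omega⟩ with hz
  set i0 : Fin k := ⟨0, by omega⟩
  set i1 : Fin k := ⟨1, by omega⟩
  set i2 : Fin k := ⟨2, by omega⟩
  have h0 : z ∈ f i0 := by
    have := hmem i0
    rw [hA01 i0 (by norm_num)] at this
    simp only [Finset.mem_filter] at this
    rcases this.2 with h | h
    · exact h
    · exact absurd h (hbig i0)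
  have h1 : z ∈ f i1 := by
    have := hmem i1
    rw [hA01 i1 (by norm_num)] at this
    simp only [Finset.mem_filter] at this
    rcases this.2 with h | h
    · exact h
    · exact absurd h (hbig i1)
  have h2 : z ∉ f i2 := by
    have := hmem i2
    rw [hA2 i2 rfl] at this
    simp only [Finset.mem_filter] at this
    rcases this.2 with h | h
    · exact h
    · exact absurd h (hbig i2)
  have h01 : i0 ≠ i1 := by intro h; apply_fun Fin.val at h; simp [i0, i1] at h
  have h20 : i2 ≠ i0 := by intro h; apply_fun Fin.val at h; simp [i0, i2] at h
  have hzC : z ∈ C := by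
    rw [← hcore i0 i1 h01]; exact Finset.mem_inter.2 ⟨h0, h1⟩
  have : z ∈ f i2 := by
    have hsub : C ⊆ f i2 := by
      rw [← hcore i2 i0 h20]; exact Finset.inter_subset_left
    exact hsub hzC
  exact h2 this
end

section
/- Let G be a bipartite graph with parts V₁ and V₂ each of size 3, such that every vertex of V₂ has degree at most 2 and G has no perfect matching (i.e., maximum matching size at most 2). Then G is a subgraph of one of: (1) K_{2,3} with the size-2 part in V₁; (2) two vertex-disjoint paths each with two edges; (3) a path with four edges whose both endpoints are in V₁. -/
set_option maxRecDepth 100000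
set_option maxHeartbeats 2000000

/-- A bipartite graph on parts of size 3 (edges `E ⊆ Fin 3 × Fin 3`, first
coordinate in `V₁`, second in `V₂`) in which every vertex of `V₂` has degree at
most 2 and which has no perfect matching is, after relabeling the two sides, a
subgraph of one of: `K_{2,3}` (size-2 part in `V₁`), two disjoint 2-edge paths,
or a 4-edge path with both endpoints in `V₁`. -/
theorem structure_no_perfect_matching (E : Finset (Fin 3 × Fin 3))
    (hdeg : ∀ v : Fin 3, (E.filter fun e => e.2 = v).card ≤ 2)
    (hnm : ¬ ∃ σ : Fin 3 → Fin 3, Function.Bijective σ ∧ ∀ u, (u, σ u) ∈ E) :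
    ∃ π ρ : Fin 3 ≃ Fin 3,
      (∀ e ∈ E, (π e.1, ρ e.2) ∈
        ({(0,0),(0,1),(0,2),(1,0),(1,1),(1,2)} : Finset (Fin 3 × Fin 3))) ∨
      (∀ e ∈ E, (π e.1, ρ e.2) ∈
        ({(0,0),(0,1),(1,2),(2,2)} : Finset (Fin 3 × Fin 3))) ∨
      (∀ e ∈ E, (π e.1, ρ e.2) ∈
        ({(0,0),(1,0),(1,1),(2,1)} : Finset (Fin 3 × Fin 3))) := by
  revert hdeg hnm; revert E; decide
end

section
/- For each bipartite graph G on parts of size 3 with every vertex of V₂ of degree at most 2 and maximum matching size at most 2, m₂(G) + t(G) ≤ 6, where m₂(G) is the number of 2-edge matchings in G and t(G) is the number of configurations consisting of a vertex v ∈ V₂ of degree 2 together with its two incident edges and one additional edge vertex-disjoint from them. -/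
/-- The number of 2-edge matchings in `E`. -/
def m2 (E : Finset (Fin 3 × Fin 3)) : ℕ :=
  ((E.powersetCard 2).filter fun s =>
    ∀ e ∈ s, ∀ e' ∈ s, e ≠ e' → e.1 ≠ e'.1 ∧ e.2 ≠ e'.2).card

/-- The number of pairs `(v, e)` where `v ∈ V₂` has degree exactly 2 and
`e` is an edge vertex-disjoint from the two edges incident to `v`. -/
def tcount (E : Finset (Fin 3 × Fin 3)) : ℕ :=
  ((Finset.univ ×ˢ E).filter fun p : Fin 3 × (Fin 3 × Fin 3) =>
    (E.filter fun e => e.2 = p.1).card = 2 ∧ p.2.2 ≠ p.1 ∧ (p.2.1, p.1) ∉ E).card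

set_option maxRecDepth 100000 in
/-- For a bipartite graph on parts of size 3 with every `V₂`-vertex of degree at
most 2 and no perfect matching, `m₂(G) + t(G) ≤ 6`. -/
theorem m2_add_t_le_six (E : Finset (Fin 3 × Fin 3))
    (hdeg : ∀ v : Fin 3, (E.filter fun e => e.2 = v).card ≤ 2)
    (hnm : ¬ ∃ σ : Fin 3 → Fin 3, Function.Bijective σ ∧ ∀ u, (u, σ u) ∈ E) :
    m2 E + tcount E ≤ 6 := by
  revert hnm hdeg; revert E; decide
end

section
/- For real numbers a, b, c, d, e, f ≥ 0 satisfying ab + bc + ca + ad + be + cf ≤ 1 and a + b + c − d − e − f ≤ 1, the product abc is at most 0.130748 (in particular abc < 0.13075). -/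
set_option maxHeartbeats 1000000 in
private theorem opt_case1 (a s : ℝ) (ha : 0 ≤ a) (hs : 0 ≤ s)
    (hg : s^2/4 + 2*a*s + a^2 ≤ 1 + a) :
    a*s^2/4 < 0.13075 := by
  nlinarith [sq_nonneg (s - 1.1813), sq_nonneg (a - 0.37478), mul_nonneg ha hs,
    mul_nonneg ha (sq_nonneg (s-1.1813)), mul_nonneg hs (sq_nonneg (a-0.37478))]

set_option maxHeartbeats 1000000 in
private theorem opt_case2 (a s : ℝ) (ha : 0 ≤ a) (hs : 0 ≤ s)
    (hg : 1 + a ≤ s^2/4 + 2*a*s + a^2) :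
    a*(1 + a - a^2 - 2*a*s) < 0.13075 := by
  nlinarith [sq_nonneg (s - 1.1813), sq_nonneg (a - 0.37478), mul_nonneg ha hs,
    mul_nonneg ha (sq_nonneg (s-1.1813)), mul_nonneg hs (sq_nonneg (a-0.37478)),
    mul_nonneg ha (sq_nonneg (a-0.37478)), sq_nonneg (a*s - 0.4427)]

private theorem opt_key (a b c : ℝ) (ha : 0 ≤ a) (hb : 0 ≤ b) (hc : 0 ≤ c)
    (h : a^2 + 2*a*b + 2*a*c + b*c ≤ 1 + a) :
    a * b * c < 0.13075 := by
  set s := b + c with hs_def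
  have hs : 0 ≤ s := by positivity
  have hq : b*c ≤ s^2/4 := by nlinarith [sq_nonneg (b - c)]
  rcases le_or_gt (s^2/4 + 2*a*s + a^2) (1+a) with hg | hg
  · have h1 := opt_case1 a s ha hs hg
    nlinarith [mul_le_mul_of_nonneg_left hq ha]
  · have hbc : b*c ≤ 1 + a - a^2 - 2*a*s := by nlinarith
    have h2 := opt_case2 a s ha hs (le_of_lt hg)
    nlinarith [mul_le_mul_of_nonneg_left hbc ha]

private theorem opt_aux (a b c d e f : ℝ)
    (ha : 0 ≤ a) (hb : 0 ≤ b) (hc : 0 ≤ c)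
    (hd : 0 ≤ d) (he : 0 ≤ e) (hf : 0 ≤ f)
    (h1 : a * b + b * c + c * a + a * d + b * e + c * f ≤ 1)
    (h2 : a + b + c - d - e - f ≤ 1)
    (hab : a ≤ b) (hac : a ≤ c) :
    a * b * c < 0.13075 := by
  apply opt_key a b c ha hb hc
  have t1 : a * e ≤ b * e := mul_le_mul_of_nonneg_right hab he
  have t2 : a * f ≤ c * f := mul_le_mul_of_nonneg_right hac hf
  have t3 : a * (a + b + c - 1) ≤ a * (d + e + f) := by
    apply mul_le_mul_of_nonneg_left _ ha; linarith
  nlinarith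

/-- The optimization problem in the upper bound for `P(n,3)`: if
`a,b,c,d,e,f ≥ 0` satisfy `ab+bc+ca+ad+be+cf ≤ 1` and `a+b+c-d-e-f ≤ 1`,
then `abc < 0.13075`.  (The maximum is `≈ 0.130748`.) -/
theorem optimization_bound (a b c d e f : ℝ)
    (ha : 0 ≤ a) (hb : 0 ≤ b) (hc : 0 ≤ c)
    (hd : 0 ≤ d) (he : 0 ≤ e) (hf : 0 ≤ f)
    (h1 : a * b + b * c + c * a + a * d + b * e + c * f ≤ 1)
    (h2 : a + b + c - d - e - f ≤ 1) :
    a * b * c < 0.13075 := by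
  rcases le_total a b with hab | hba
  · rcases le_total a c with hac | hca
    · exact opt_aux a b c d e f ha hb hc hd he hf h1 h2 hab hac
    · have := opt_aux c a b f d e hc ha hb hf hd he
        (by linear_combination h1) (by linarith) hca (hca.trans hab)
      linarith [this, show a*b*c = c*a*b by ring]
  · rcases le_total b c with hbc | hcb
    · have := opt_aux b a c e d f hb ha hc he hd hf
        (by linear_combination h1) (by linarith) hba hbc
      linarith [this, show a*b*c = b*a*c by ring]
    · have := opt_aux c a b f d e hc ha hb hf hd he
        (by linear_combination h1) (by linarith) (hcb.trans hba) hcb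
      linarith [this, show a*b*c = c*a*b by ring]
end

section
/- For real numbers a, b, d ≥ 0 satisfying 2ab + b² + ad = 1 and a + 2b − d = 1, the product ab² is at most 0.130748. -/
/-- Case 3 of the KKT analysis: if `a, b, d ≥ 0` satisfy `2ab + b² + ad = 1`
and `a + 2b − d = 1`, then `ab² < 0.13075`.  (The maximum is `≈ 0.130748`,
attained at `a ≈ 0.37478`, `b ≈ 0.590649`, `d ≈ 0.556078`.) -/
theorem case3_bound (a b d : ℝ) (ha : 0 ≤ a) (hb : 0 ≤ b) (hd : 0 ≤ d)
    (h1 : 2 * a * b + b ^ 2 + a * d = 1)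
    (h2 : a + 2 * b - d = 1) :
    a * b ^ 2 < 0.13075 := by
  have hd' : d = a + 2*b - 1 := by linarith
  subst hd'
  have hc : a^2 + 4*a*b + b^2 - a = 1 := by nlinarith [h1]
  nlinarith [sq_nonneg (a - 0.37478), sq_nonneg (b - 0.590649), sq_nonneg (a*b - 0.221359), sq_nonneg (a + 2*b - 1.556078), mul_nonneg ha hb, sq_nonneg (a - b), hd]
end

section
/- For real numbers a, b, x > 0 satisfying 2ab + a² + ax = 1 and 2a + b − x = 1, the product a²b is at most (29 + 20√10)/729, with equality when a = (1+√10)/9. -/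
/-- Case 2 of the KKT analysis: if `a, b, x > 0` satisfy `2ab + a² + ax = 1`
and `2a + b − x = 1`, then `a²b ≤ (29 + 20√10)/729`, with equality when
`a = (1 + √10)/9`. -/
theorem case2_bound (a b x : ℝ) (ha : 0 < a) (hb : 0 < b) (hx : 0 < x)
    (h1 : 2 * a * b + a ^ 2 + a * x = 1)
    (h2 : 2 * a + b - x = 1) :
    a ^ 2 * b ≤ (29 + 20 * Real.sqrt 10) / 729 ∧
      (a = (1 + Real.sqrt 10) / 9 →
        a ^ 2 * b = (29 + 20 * Real.sqrt 10) / 729) := by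
  set s := Real.sqrt 10 with hsdef
  have hs : s ^ 2 = 10 := Real.sq_sqrt (by norm_num)
  have hs0 : (3:ℝ) ≤ s := by
    nlinarith [Real.sqrt_nonneg 10]
  have key : 3 * (a ^ 2 * b) = a + a ^ 2 - 3 * a ^ 3 := by
    linear_combination a * h1 + a ^ 2 * h2
  constructor
  · nlinarith [sq_nonneg (a - (1 + s) / 9), mul_pos ha ha, ha,
      mul_nonneg (sq_nonneg (a - (1 + s) / 9)) (le_of_lt ha)]
  · intro haeq
    have : 3 * (a ^ 2 * b) = 3 * ((29 + 20 * s) / 729) := by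
      rw [key, haeq]; ring_nf; nlinarith [hs]
    linarith
end

section
/- Let n ≡ 1 or 3 (mod 6) and let G₁, G₂, G₃ be graphs on vertex set [n]. If there is no 'multicolored triangle' — i.e., no three vertices x, y, z with {x,y} ∈ G₁, {y,z} ∈ G₂, {x,z} ∈ G₃ — then |E(G₁)| + |E(G₂)| + |E(G₃)| ≤ 2·C(n,2). -/
open Finset

lemma sum_ind_aux {n : ℕ} (G : SimpleGraph (Fin n)) [DecidableRel G.Adj] :
    ∑ x : Fin n, ∑ y : Fin n, (if G.Adj x y then 1 else 0) = 2 * G.edgeFinset.card := by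
  have h : ∀ x : Fin n, ∑ y : Fin n, (if G.Adj x y then 1 else 0) = G.degree x := by
    intro x
    rw [← SimpleGraph.card_neighborFinset_eq_degree, SimpleGraph.neighborFinset_eq_filter,
      Finset.card_filter]
  simp_rw [h]
  exact G.sum_degrees_eq_twice_card_edges

lemma swap_inner_aux {α : Type*} [DecidableEq α] (s : Finset α) (g : α → α → ℕ) :
    ∑ y ∈ s, ∑ z ∈ s.erase y, g y z = ∑ z ∈ s, ∑ y ∈ s.erase z, g y z := by
  apply Finset.sum_comm'
  intro y z
  simp only [Finset.mem_erase]
  constructor <;> intro h <;> simp_all [ne_comm]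

/-- If `n ≡ 1, 3 (mod 6)` and graphs `G₁, G₂, G₃` on `[n]` contain no
multicolored triangle (`{x,y} ∈ G₁`, `{y,z} ∈ G₂`, `{x,z} ∈ G₃`), then
`|E(G₁)| + |E(G₂)| + |E(G₃)| ≤ 2·C(n,2)`. -/
theorem no_rainbow_triangle_bound (n : ℕ) (hn : n % 6 = 1 ∨ n % 6 = 3)
    (G₁ G₂ G₃ : SimpleGraph (Fin n))
    [DecidableRel G₁.Adj] [DecidableRel G₂.Adj] [DecidableRel G₃.Adj]
    (hfree : ¬ ∃ x y z : Fin n, G₁.Adj x y ∧ G₂.Adj y z ∧ G₃.Adj x z) :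
    G₁.edgeFinset.card + G₂.edgeFinset.card + G₃.edgeFinset.card ≤
      2 * n.choose 2 := by
  classical
  -- indicator functions
  set i1 : Fin n → Fin n → ℕ := fun x y => if G₁.Adj x y then 1 else 0 with hi1
  set i2 : Fin n → Fin n → ℕ := fun x y => if G₂.Adj x y then 1 else 0 with hi2
  set i3 : Fin n → Fin n → ℕ := fun x y => if G₃.Adj x y then 1 else 0 with hi3
  rcases Nat.lt_or_ge n 3 with hlt | hge
  · -- then n = 1 and all graphs are empty
    have hn1 : n = 1 := by omega
    subst hn1
    have h0 : ∀ (G : SimpleGraph (Fin 1)) [DecidableRel G.Adj], G.edgeFinset.card = 0 := by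
      intro G _
      have := sum_ind_aux G
      have hz : ∑ x : Fin 1, ∑ y : Fin 1, (if G.Adj x y then 1 else 0) = 0 := by
        apply Finset.sum_eq_zero; intro x _
        apply Finset.sum_eq_zero; intro y _
        have : x = y := Subsingleton.elim x y
        simp [this]
      omega
    rw [h0 G₁, h0 G₂, h0 G₃]
    simp
  · have key : ∀ x y z : Fin n, i1 x y + i2 y z + i3 x z ≤ 2 := by
      intro x y z
      by_cases h1 : G₁.Adj x y <;> by_cases h2 : G₂.Adj y z <;> by_cases h3 : G₃.Adj x z <;>
        simp [hi1, hi2, hi3, h1, h2, h3]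
      exact hfree ⟨x, y, z, h1, h2, h3⟩
    -- cardinality facts
    have cardu : (univ : Finset (Fin n)).card = n := by simp
    have c1 : ∀ x : Fin n, (univ.erase x).card = n - 1 := by
      intro x; rw [Finset.card_erase_of_mem (Finset.mem_univ x), cardu]
    have c2 : ∀ (x : Fin n) (y : Fin n), y ∈ univ.erase x → ((univ.erase x).erase y).card = n - 2 := by
      intro x y hy
      rw [Finset.card_erase_of_mem hy, c1 x]
      omega
    -- the big sum bound
    have hS : ∑ x : Fin n, ∑ y ∈ univ.erase x, ∑ z ∈ (univ.erase x).erase y,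
        (i1 x y + i2 y z + i3 x z) ≤ n * ((n - 1) * ((n - 2) * 2)) := by
      calc ∑ x : Fin n, ∑ y ∈ univ.erase x, ∑ z ∈ (univ.erase x).erase y,
            (i1 x y + i2 y z + i3 x z)
          ≤ ∑ x : Fin n, ∑ y ∈ univ.erase x, ∑ z ∈ (univ.erase x).erase y, 2 := by
            apply Finset.sum_le_sum; intro x _
            apply Finset.sum_le_sum; intro y _
            apply Finset.sum_le_sum; intro z _
            exact key x y z
        _ = n * ((n - 1) * ((n - 2) * 2)) := by
            have : ∀ x : Fin n, ∑ y ∈ univ.erase x, ∑ z ∈ (univ.erase x).erase y, 2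
                = (n - 1) * ((n - 2) * 2) := by
              intro x
              rw [Finset.sum_congr rfl (fun y hy => by
                rw [Finset.sum_const, c2 x y hy, smul_eq_mul])]
              rw [Finset.sum_const, c1 x, smul_eq_mul]
            rw [Finset.sum_congr rfl (fun x _ => this x), Finset.sum_const, cardu, smul_eq_mul]
    -- split the big sum
    have hsplit : ∑ x : Fin n, ∑ y ∈ univ.erase x, ∑ z ∈ (univ.erase x).erase y,
        (i1 x y + i2 y z + i3 x z)
        = (∑ x : Fin n, ∑ y ∈ univ.erase x, ∑ z ∈ (univ.erase x).erase y, i1 x y)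
        + (∑ x : Fin n, ∑ y ∈ univ.erase x, ∑ z ∈ (univ.erase x).erase y, i2 y z)
        + (∑ x : Fin n, ∑ y ∈ univ.erase x, ∑ z ∈ (univ.erase x).erase y, i3 x z) := by
      simp [Finset.sum_add_distrib]
    -- diagonal vanishing
    have d1 : ∀ x : Fin n, i1 x x = 0 := fun x => by simp [hi1]
    have d2 : ∀ x : Fin n, i2 x x = 0 := fun x => by simp [hi2]
    have d3 : ∀ x : Fin n, i3 x x = 0 := fun x => by simp [hi3]
    -- S1
    have hS1 : ∑ x : Fin n, ∑ y ∈ univ.erase x, ∑ z ∈ (univ.erase x).erase y, i1 x y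
        = (n - 2) * (2 * G₁.edgeFinset.card) := by
      have : ∀ x : Fin n, ∑ y ∈ univ.erase x, ∑ z ∈ (univ.erase x).erase y, i1 x y
          = ∑ y : Fin n, (n - 2) * i1 x y := by
        intro x
        rw [Finset.sum_congr rfl (fun y hy => by
          rw [Finset.sum_const, c2 x y hy, smul_eq_mul])]
        rw [Finset.sum_erase _ (by simp [d1 x])]
      simp_rw [this, ← Finset.mul_sum]
      rw [sum_ind_aux G₁]
    -- S2
    have hS2 : ∑ x : Fin n, ∑ y ∈ univ.erase x, ∑ z ∈ (univ.erase x).erase y, i2 y z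
        = (n - 2) * (2 * G₂.edgeFinset.card) := by
      have e1 : ∑ x : Fin n, ∑ y ∈ univ.erase x, ∑ z ∈ (univ.erase x).erase y, i2 y z
          = ∑ x : Fin n, ∑ y ∈ univ.erase x, ∑ z ∈ (univ.erase y).erase x, i2 y z := by
        apply Finset.sum_congr rfl; intro x _
        apply Finset.sum_congr rfl; intro y _
        rw [Finset.erase_right_comm]
      rw [e1]
      have e2 : ∑ x ∈ (univ : Finset (Fin n)), ∑ y ∈ univ.erase x,
            (∑ z ∈ (univ.erase y).erase x, i2 y z)
          = ∑ y ∈ (univ : Finset (Fin n)), ∑ x ∈ univ.erase y,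
            (∑ z ∈ (univ.erase y).erase x, i2 y z) :=
        swap_inner_aux univ (fun x y => ∑ z ∈ (univ.erase y).erase x, i2 y z)
      rw [e2]
      have e3 : ∀ y : Fin n, ∑ x ∈ univ.erase y, ∑ z ∈ (univ.erase y).erase x, i2 y z
          = ∑ z ∈ univ.erase y, ∑ x ∈ (univ.erase y).erase z, i2 y z := by
        intro y
        exact swap_inner_aux (univ.erase y) (fun x z => i2 y z)
      simp_rw [e3]
      have e4 : ∀ y : Fin n, ∑ z ∈ univ.erase y, ∑ x ∈ (univ.erase y).erase z, i2 y z
          = ∑ z : Fin n, (n - 2) * i2 y z := by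
        intro y
        rw [Finset.sum_congr rfl (fun z hz => by
          rw [Finset.sum_const, c2 y z hz, smul_eq_mul])]
        rw [Finset.sum_erase _ (by simp [d2 y])]
      simp_rw [e4, ← Finset.mul_sum]
      rw [sum_ind_aux G₂]
    -- S3
    have hS3 : ∑ x : Fin n, ∑ y ∈ univ.erase x, ∑ z ∈ (univ.erase x).erase y, i3 x z
        = (n - 2) * (2 * G₃.edgeFinset.card) := by
      have e3 : ∀ x : Fin n, ∑ y ∈ univ.erase x, ∑ z ∈ (univ.erase x).erase y, i3 x z
          = ∑ z ∈ univ.erase x, ∑ y ∈ (univ.erase x).erase z, i3 x z := by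
        intro x
        exact swap_inner_aux (univ.erase x) (fun y z => i3 x z)
      simp_rw [e3]
      have e4 : ∀ x : Fin n, ∑ z ∈ univ.erase x, ∑ y ∈ (univ.erase x).erase z, i3 x z
          = ∑ z : Fin n, (n - 2) * i3 x z := by
        intro x
        rw [Finset.sum_congr rfl (fun z hz => by
          rw [Finset.sum_const, c2 x z hz, smul_eq_mul])]
        rw [Finset.sum_erase _ (by simp [d3 x])]
      simp_rw [e4, ← Finset.mul_sum]
      rw [sum_ind_aux G₃]
    -- combine
    rw [hsplit, hS1, hS2, hS3] at hS
    have hmul : (n - 2) * (2 * (G₁.edgeFinset.card + G₂.edgeFinset.card + G₃.edgeFinset.card))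
        ≤ (n - 2) * (2 * (n * (n - 1))) := by
      calc (n - 2) * (2 * (G₁.edgeFinset.card + G₂.edgeFinset.card + G₃.edgeFinset.card))
          = (n - 2) * (2 * G₁.edgeFinset.card) + (n - 2) * (2 * G₂.edgeFinset.card)
            + (n - 2) * (2 * G₃.edgeFinset.card) := by ring
        _ ≤ n * ((n - 1) * ((n - 2) * 2)) := hS
        _ = (n - 2) * (2 * (n * (n - 1))) := by ring
    have hE : 2 * (G₁.edgeFinset.card + G₂.edgeFinset.card + G₃.edgeFinset.card)
        ≤ 2 * (n * (n - 1)) :=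
      Nat.le_of_mul_le_mul_left hmul (by omega)
    have hch : 2 * n.choose 2 = n * (n - 1) := by
      rw [Nat.choose_two_right]
      have heven : 2 ∣ n * (n - 1) := by
        obtain ⟨m, rfl⟩ : ∃ m, n = m + 1 := ⟨n - 1, by omega⟩
        simp only [Nat.add_sub_cancel]
        rw [mul_comm]
        exact (Nat.even_mul_succ_self m).two_dvd
      exact Nat.mul_div_cancel' heven
    omega
end
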